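/- Uniqueness for the heat equation with modest growth: let u be a continuous real-valued function on ℝⁿ × [0,∞) that is bounded, infinitely differentiable on ℝⁿ × (0,∞), satisfies the heat equation ∂u/∂t = Δu on ℝⁿ × (0,∞), and satisfies u(x,0) = 0 for all x ∈ ℝⁿ. Then u ≡ 0. Consequently, for bounded continuous initial data f there is at most one bounded continuous solution of the heat equation on ℝⁿ × [0,∞) with u(·,0) = f. -/

import Mathlib

open MeasureTheory Real

/-- The Laplacian `Δf = ∑ j, ∂²f/∂x_j²` of a function on `ℝⁿ`. -/
noncomputable def laplacian {n : ℕ} (f : EuclideanSpace ℝ (Fin n) → ℝ)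
    (x : EuclideanSpace ℝ (Fin n)) : ℝ :=
  ∑ j : Fin n,
    fderiv ℝ (fun y => fderiv ℝ f y (EuclideanSpace.single j 1)) x (EuclideanSpace.single j 1)

/-- `u : ℝⁿ × [0,∞) → ℝ` is a bounded solution of the heat equation: it is continuous on
`ℝⁿ × [0,∞)`, bounded there, smooth on `ℝⁿ × (0,∞)`, and satisfies `∂u/∂t = Δu` for `t > 0`. -/
def IsBoundedHeatSolution {n : ℕ} (u : EuclideanSpace ℝ (Fin n) → ℝ → ℝ) : Prop :=
  ContinuousOn (fun p : EuclideanSpace ℝ (Fin n) × ℝ => u p.1 p.2)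
      {p : EuclideanSpace ℝ (Fin n) × ℝ | 0 ≤ p.2}
    ∧ (∃ C : ℝ, ∀ (x : EuclideanSpace ℝ (Fin n)) (t : ℝ), 0 ≤ t → |u x t| ≤ C)
    ∧ ContDiffOn ℝ ((⊤ : ℕ∞) : WithTop ℕ∞)
        (fun p : EuclideanSpace ℝ (Fin n) × ℝ => u p.1 p.2)
        {p : EuclideanSpace ℝ (Fin n) × ℝ | 0 < p.2}
    ∧ ∀ (x : EuclideanSpace ℝ (Fin n)) (t : ℝ), 0 < t →
        HasDerivAt (fun s : ℝ => u x s) (laplacian (fun y => u y t) x) t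

/-! Weak maximum principle. For `ε > 0` the function `w = u - ε (‖x‖² + (2n+1) t)` satisfies
`∂ₜw < Δw`, so on a cylinder `closedBall 0 R × [0, T]` it attains its maximum where `t = 0` or
`‖x‖ = R`. If `u(·, 0) ≤ 0` and `ε R²` exceeds the bound of `u`, that maximum is `≤ 0`; letting
`ε → 0` gives `u ≤ 0`. Applied to differences of solutions this yields uniqueness. -/

open Filter Set Metric Topology

theorem HasDerivAt.nonneg_of_eventually_le_left {f : ℝ → ℝ} {d a : ℝ} (hf : HasDerivAt f d a)
    (h : ∀ᶠ s in 𝓝[<] a, f s ≤ f a) : 0 ≤ d := by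
  refine ge_of_tendsto (hasDerivAt_iff_tendsto_slope_left_right.1 hf).1 ?_
  filter_upwards [h, self_mem_nhdsWithin] with s hfs hs
  rw [slope_def_field]
  exact div_nonneg_of_nonpos (sub_nonpos.2 hfs) (sub_nonpos.2 hs.le)

-- A local maximum with positive second derivative would also be a local minimum, making `f`
-- locally constant.
theorem IsLocalMax.deriv_deriv_nonpos {f : ℝ → ℝ} {a : ℝ} (h : IsLocalMax f a)
    (hc : ContinuousAt f a) : deriv (deriv f) a ≤ 0 := by
  by_contra! hpos
  have hconst : f =ᶠ[𝓝 a] fun _ => f a :=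
    (h.and (isLocalMin_of_deriv_deriv_pos hpos h.deriv_eq_zero hc)).mono
      fun _ hs => le_antisymm hs.1 hs.2
  refine hpos.ne' ?_
  rw [hconst.deriv.deriv_eq]
  simp

section NormedSpace

variable {E : Type*} [NormedAddCommGroup E] [NormedSpace ℝ E]

theorem ContDiff.differentiable_fderiv_apply {f : E → ℝ} (hf : ContDiff ℝ 2 f) (v : E) :
    Differentiable ℝ fun y => fderiv ℝ f y v :=
  ((hf.fderiv_right (m := 1) (by norm_num)).clm_apply contDiff_const).differentiable one_ne_zero

theorem IsLocalMax.fderiv_fderiv_apply_nonpos {f : E → ℝ} {a : E} (h : IsLocalMax f a)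
    (hf : ContDiff ℝ 2 f) (v : E) : fderiv ℝ (fun y => fderiv ℝ f y v) a v ≤ 0 := by
  set line : ℝ → E := fun s => a + s • v
  have hline : ∀ s, HasDerivAt line v s := fun s => by
    simpa only [one_smul] using ((hasDerivAt_id' s).smul_const v).const_add a
  have hline0 : line 0 = a := by simp [line]
  have hderiv : deriv (f ∘ line) = fun s => fderiv ℝ f (line s) v := funext fun s =>
    ((hf.differentiable two_ne_zero _).hasFDerivAt.comp_hasDerivAt s (hline s)).deriv
  have hderiv2 : deriv (deriv (f ∘ line)) 0 = fderiv ℝ (fun y => fderiv ℝ f y v) a v := by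
    rw [hderiv, ← hline0]
    exact ((hf.differentiable_fderiv_apply v _).hasFDerivAt.comp_hasDerivAt 0 (hline 0)).deriv
  rw [← hderiv2]
  exact (hline0 ▸ h).comp_continuous (hline 0).continuousAt |>.deriv_deriv_nonpos
    (hf.continuous.continuousAt.comp (hline 0).continuousAt)

end NormedSpace

section Laplacian

variable {n : ℕ}

theorem laplacian_sub {f g : EuclideanSpace ℝ (Fin n) → ℝ} (hf : ContDiff ℝ 2 f)
    (hg : ContDiff ℝ 2 g) (x : EuclideanSpace ℝ (Fin n)) :
    laplacian (fun y => f y - g y) x = laplacian f x - laplacian g x := by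
  simp only [laplacian, ← Finset.sum_sub_distrib]
  refine Finset.sum_congr rfl fun j _ => ?_
  set v : EuclideanSpace ℝ (Fin n) := EuclideanSpace.single j 1
  have hdir : (fun y => fderiv ℝ (fun z => f z - g z) y v)
      = fun y => fderiv ℝ f y v - fderiv ℝ g y v := funext fun y => by
    rw [fderiv_fun_sub (hf.differentiable two_ne_zero y) (hg.differentiable two_ne_zero y)]
    rfl
  rw [hdir, fderiv_fun_sub (hf.differentiable_fderiv_apply v x)
    (hg.differentiable_fderiv_apply v x)]
  rfl

theorem laplacian_const_mul_norm_sq_add_const (c k : ℝ) (x : EuclideanSpace ℝ (Fin n)) :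
    laplacian (fun y => c * ‖y‖ ^ 2 + k) x = 2 * n * c := by
  have hsecond : ∀ v : EuclideanSpace ℝ (Fin n),
      fderiv ℝ (fun y => fderiv ℝ (fun z => c * ‖z‖ ^ 2 + k) y v) x v = 2 * c * ‖v‖ ^ 2 := by
    intro v
    have hdir : (fun y => fderiv ℝ (fun z => c * ‖z‖ ^ 2 + k) y v)
        = fun y => 2 * c * innerSL ℝ v y := funext fun y => by
      rw [fderiv_add_const, fderiv_const_mul ((contDiff_norm_sq ℝ).differentiable two_ne_zero y),
        fderiv_norm_sq_apply, innerSL_apply_apply, real_inner_comm]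
      simp only [smul_apply, innerSL_apply_apply, nsmul_eq_mul]
      ring
    rw [hdir, (((innerSL ℝ v).hasFDerivAt (x := x)).const_mul (2 * c)).fderiv]
    simp
  simp only [laplacian, hsecond, PiLp.norm_single, norm_one, one_pow, mul_one,
    Finset.sum_const, Finset.card_univ, Fintype.card_fin, nsmul_eq_mul]
  ring

theorem IsLocalMax.laplacian_nonpos {f : EuclideanSpace ℝ (Fin n) → ℝ}
    {a : EuclideanSpace ℝ (Fin n)} (h : IsLocalMax f a) (hf : ContDiff ℝ 2 f) :
    laplacian f a ≤ 0 :=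
  Finset.sum_nonpos fun _ _ => h.fderiv_fderiv_apply_nonpos hf _

end Laplacian

section HeatEquation

variable {n : ℕ}

def IsStrictHeatSubsolution (w : EuclideanSpace ℝ (Fin n) → ℝ → ℝ) : Prop :=
  (∀ t, 0 < t → ContDiff ℝ 2 fun y => w y t)
    ∧ ∀ x t, 0 < t → ∃ d, HasDerivAt (fun s => w x s) d t ∧ d < laplacian (fun y => w y t) x

-- At an interior or top maximum we would have `Δw ≤ 0 ≤ ∂ₜw`.
theorem IsStrictHeatSubsolution.eq_zero_or_norm_eq_of_isMaxOn
    {w : EuclideanSpace ℝ (Fin n) → ℝ → ℝ} (hw : IsStrictHeatSubsolution w)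
    {R T t₀ : ℝ} {x₀ : EuclideanSpace ℝ (Fin n)}
    (hmem : (x₀, t₀) ∈ closedBall 0 R ×ˢ Icc 0 T)
    (hmax : IsMaxOn (fun p => w p.1 p.2) (closedBall 0 R ×ˢ Icc 0 T) (x₀, t₀)) :
    t₀ = 0 ∨ ‖x₀‖ = R := by
  obtain ⟨hx₀, ht₀0, ht₀T⟩ := hmem
  by_contra! hinterior
  have ht₀ : 0 < t₀ := lt_of_le_of_ne ht₀0 (Ne.symm hinterior.1)
  have hx₀R : ‖x₀‖ < R := lt_of_le_of_ne (mem_closedBall_zero_iff.1 hx₀) hinterior.2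
  obtain ⟨d, hd, hlt⟩ := hw.2 x₀ t₀ ht₀
  have hspace : IsLocalMax (fun y => w y t₀) x₀ := by
    filter_upwards [isOpen_ball.mem_nhds (mem_ball_zero_iff.2 hx₀R)] with y hy
    exact hmax (mk_mem_prod (ball_subset_closedBall hy) ⟨ht₀0, ht₀T⟩)
  have htime : ∀ᶠ s in 𝓝[<] t₀, w x₀ s ≤ w x₀ t₀ := by
    filter_upwards [Ioo_mem_nhdsLT ht₀] with s hs
    exact hmax (mk_mem_prod hx₀ ⟨hs.1.le, hs.2.le.trans ht₀T⟩)
  linarith [hd.nonneg_of_eventually_le_left htime, hspace.laplacian_nonpos (hw.1 t₀ ht₀)]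

namespace IsBoundedHeatSolution

variable {u v : EuclideanSpace ℝ (Fin n) → ℝ → ℝ}

theorem contDiff_slice (hu : IsBoundedHeatSolution u) {t : ℝ} (ht : 0 < t) :
    ContDiff ℝ 2 fun y => u y t := by
  rw [← contDiffOn_univ]
  exact (hu.2.2.1.of_le (by norm_cast)).comp
    (contDiff_id.prodMk contDiff_const).contDiffOn fun _ _ => ht

-- `ε (‖x‖² + (2n+1) t)` satisfies `∂ₜ - Δ = ε`, so subtracting it turns a solution into a
-- strict subsolution.
theorem isStrictHeatSubsolution_sub_barrier (hu : IsBoundedHeatSolution u) {ε : ℝ}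
    (hε : 0 < ε) :
    IsStrictHeatSubsolution fun x t => u x t - (ε * ‖x‖ ^ 2 + ε * (2 * n + 1) * t) := by
  have hbarrier : ContDiff ℝ 2 fun y : EuclideanSpace ℝ (Fin n) => ε * ‖y‖ ^ 2 :=
    contDiff_const.mul (contDiff_norm_sq ℝ)
  refine ⟨fun t ht => (hu.contDiff_slice ht).sub (hbarrier.add contDiff_const), fun x t ht =>
    ⟨laplacian (fun y => u y t) x - ε * (2 * n + 1), ?_, ?_⟩⟩
  · simpa only [mul_one] using (hu.2.2.2 x t ht).fun_sub
      (((hasDerivAt_id' t).const_mul (ε * (2 * n + 1))).const_add (ε * ‖x‖ ^ 2))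
  · beta_reduce
    rw [laplacian_sub (hu.contDiff_slice ht) (hbarrier.add contDiff_const),
      laplacian_const_mul_norm_sq_add_const]
    linarith

theorem le_barrier (hu : IsBoundedHeatSolution u) (h0 : ∀ x, u x 0 ≤ 0) {ε : ℝ} (hε : 0 < ε)
    (x : EuclideanSpace ℝ (Fin n)) {t : ℝ} (ht : 0 ≤ t) :
    u x t ≤ ε * ‖x‖ ^ 2 + ε * (2 * n + 1) * t := by
  obtain ⟨C, hC⟩ := hu.2.1
  obtain ⟨R, hCR, hxR⟩ : ∃ R, C ≤ ε * R ^ 2 ∧ ‖x‖ ≤ R :=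
    (((tendsto_pow_atTop two_ne_zero).const_mul_atTop hε).eventually_ge_atTop C).and
      (eventually_ge_atTop ‖x‖) |>.exists
  set w : EuclideanSpace ℝ (Fin n) → ℝ → ℝ :=
    fun x t => u x t - (ε * ‖x‖ ^ 2 + ε * (2 * n + 1) * t)
  have hK : IsCompact (closedBall (0 : EuclideanSpace ℝ (Fin n)) R ×ˢ Icc 0 t) :=
    (isCompact_closedBall _ _).prod isCompact_Icc
  have hxt : (x, t) ∈ closedBall 0 R ×ˢ Icc 0 t :=
    mk_mem_prod (mem_closedBall_zero_iff.2 hxR) ⟨ht, le_rfl⟩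
  have hwc : ContinuousOn (fun p => w p.1 p.2) (closedBall 0 R ×ˢ Icc 0 t) :=
    (hu.1.mono fun p hp => hp.2.1).sub (by fun_prop)
  obtain ⟨⟨x₀, t₀⟩, hmem, hmax⟩ := hK.exists_isMaxOn ⟨_, hxt⟩ hwc
  have hw₀ : w x₀ t₀ ≤ 0 := by
    rcases (hu.isStrictHeatSubsolution_sub_barrier hε).eq_zero_or_norm_eq_of_isMaxOn hmem hmax
      with rfl | hR
    · simp only [w]
      nlinarith [h0 x₀, sq_nonneg ‖x₀‖]
    · have hu_le : u x₀ t₀ ≤ C := le_of_abs_le (hC x₀ t₀ hmem.2.1)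
      have htime_nonneg : 0 ≤ ε * (2 * n + 1) * t₀ := mul_nonneg (by positivity) hmem.2.1
      simp only [w, hR]
      linarith
  have hle : w x t ≤ w x₀ t₀ := isMaxOn_iff.1 hmax _ hxt
  simp only [w] at hle
  linarith

theorem nonpos_of_initial_nonpos (hu : IsBoundedHeatSolution u) (h0 : ∀ x, u x 0 ≤ 0)
    (x : EuclideanSpace ℝ (Fin n)) {t : ℝ} (ht : 0 ≤ t) : u x t ≤ 0 := by
  have hlim : Tendsto (fun ε : ℝ => ε * ‖x‖ ^ 2 + ε * (2 * n + 1) * t) (𝓝[>] 0) (𝓝 0) :=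
    tendsto_nhdsWithin_of_tendsto_nhds <|
      (by fun_prop : Continuous fun ε : ℝ => ε * ‖x‖ ^ 2 + ε * (2 * n + 1) * t).tendsto' 0 0
        (by simp)
  exact ge_of_tendsto hlim (eventually_nhdsWithin_of_forall fun ε hε => hu.le_barrier h0 hε x ht)

theorem sub (hu : IsBoundedHeatSolution u) (hv : IsBoundedHeatSolution v) :
    IsBoundedHeatSolution fun x t => u x t - v x t := by
  refine ⟨hu.1.sub hv.1, ?_, hu.2.2.1.sub hv.2.2.1, fun x t ht => ?_⟩
  · obtain ⟨Cu, hCu⟩ := hu.2.1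
    obtain ⟨Cv, hCv⟩ := hv.2.1
    exact ⟨Cu + Cv, fun x t ht => (abs_sub _ _).trans (add_le_add (hCu x t ht) (hCv x t ht))⟩
  · rw [laplacian_sub (hu.contDiff_slice ht) (hv.contDiff_slice ht)]
    exact (hu.2.2.2 x t ht).fun_sub (hv.2.2.2 x t ht)

theorem le_of_initial_le (hu : IsBoundedHeatSolution u) (hv : IsBoundedHeatSolution v)
    (h0 : ∀ x, u x 0 ≤ v x 0) (x : EuclideanSpace ℝ (Fin n)) {t : ℝ} (ht : 0 ≤ t) :
    u x t ≤ v x t :=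
  sub_nonpos.1 <| (hu.sub hv).nonpos_of_initial_nonpos (fun x => sub_nonpos.2 (h0 x)) x ht

end IsBoundedHeatSolution

theorem isBoundedHeatSolution_zero :
    IsBoundedHeatSolution fun (_ : EuclideanSpace ℝ (Fin n)) (_ : ℝ) => (0 : ℝ) :=
  ⟨continuousOn_const, ⟨0, by simp⟩, contDiffOn_const, fun x t _ => by
    simpa [laplacian] using hasDerivAt_const t (0 : ℝ)⟩

end HeatEquation

/-- Uniqueness for the heat equation with modest growth: a bounded solution of the heat
equation on `ℝⁿ × [0,∞)` vanishing at `t = 0` vanishes identically; consequently, two bounded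
solutions with the same (bounded continuous) initial data coincide on `ℝⁿ × [0,∞)`. -/
theorem heat_equation_uniqueness (n : ℕ) :
    (∀ u : EuclideanSpace ℝ (Fin n) → ℝ → ℝ, IsBoundedHeatSolution u →
      (∀ x, u x 0 = 0) → ∀ (x : EuclideanSpace ℝ (Fin n)) (t : ℝ), 0 ≤ t → u x t = 0)
      ∧ ∀ (f : EuclideanSpace ℝ (Fin n) → ℝ), Continuous f → (∃ C, ∀ x, |f x| ≤ C) →
          ∀ u v : EuclideanSpace ℝ (Fin n) → ℝ → ℝ,
            IsBoundedHeatSolution u → IsBoundedHeatSolution v →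
            (∀ x, u x 0 = f x) → (∀ x, v x 0 = f x) →
            ∀ (x : EuclideanSpace ℝ (Fin n)) (t : ℝ), 0 ≤ t → u x t = v x t := by
  refine ⟨fun u hu h0 x t ht => le_antisymm ?_ ?_, fun f _ _ u v hu hv hu0 hv0 x t ht => ?_⟩
  · exact hu.le_of_initial_le isBoundedHeatSolution_zero (fun x => (h0 x).le) x ht
  · exact isBoundedHeatSolution_zero.le_of_initial_le hu (fun x => (h0 x).ge) x ht
  · have h0 : ∀ x, u x 0 = v x 0 := fun x => (hu0 x).trans (hv0 x).symm
    exact le_antisymm (hu.le_of_initial_le hv (fun x => (h0 x).le) x ht)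
      (hv.le_of_initial_le hu (fun x => (h0 x).ge) x ht)
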